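/- arXiv:2109.08015 — 2 statements merged into one kernel-verified Lean document; each statement's English description precedes it below -/
import Mathlib

section
/- Let Λ be a finite dimensional k-algebra and V a finitely generated left Λ-module. For every i ≥ 1 there is a finitely generated projective left Λ-module T'_i and an isomorphism of left Λ-modules Ω^i_{Λᵉ}Λ ⊗_Λ V ≅ Ω^i_Λ V ⊕ T'_i, where Ω^i_Λ V is the i-th syzygy of V with respect to projective covers. -/
/- STATEMENT 7: Let Λ be a finite dimensional k-algebra and V a finitely generated left
Λ-module. For every i ≥ 1 there is a finitely generated projective left Λ-module T'_i and
an isomorphism of left Λ-modules Ω^i_{Λᵉ}Λ ⊗_Λ V ≅ Ω^i_Λ V ⊕ T'_i, where Ω^i_Λ V is the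
i-th syzygy of V with respect to projective covers and Ω^i_{Λᵉ}Λ is the i-th syzygy of Λ
as a bimodule (module over Λᵉ = Λ ⊗_k Λᵐᵒᵖ). -/

universe u
open CategoryTheory TensorProduct

/-- `f : P → V` is a projective cover: `P` is projective, `f` is surjective, and the
kernel of `f` is superfluous (small) in `P`. -/
structure IsProjectiveCover (A : Type u) [Ring A] {P V : Type u} [AddCommGroup P] [Module A P]
    [AddCommGroup V] [Module A V] (f : P →ₗ[A] V) : Prop where
  projective : Module.Projective A P
  surjective : Function.Surjective f
  superfluous : ∀ N : Submodule A P, N ⊔ LinearMap.ker f = ⊤ → N = ⊤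
/-- `W` is (isomorphic to) a first syzygy of `N` over `A`: the kernel of a projective
cover of `N`. -/
def IsFirstSyzygy (A : Type u) [Ring A] (W N : ModuleCat.{u} A) : Prop :=
  ∃ (P : ModuleCat.{u} A) (f : P →ₗ[A] N), Module.Finite A P ∧ IsProjectiveCover A f ∧
    Nonempty (W ≃ₗ[A] ↥(LinearMap.ker f))

/-- `W` is (isomorphic to) the `n`-th syzygy `Ω^n_A N` of `N` over `A`, taken with
respect to projective covers. -/
def IsNthSyzygy (A : Type u) [Ring A] : ℕ → ModuleCat.{u} A → ModuleCat.{u} A → Prop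
  | 0 => fun W N => Nonempty (W ≃ₗ[A] N)
  | n + 1 => fun W N => ∃ K : ModuleCat.{u} A, IsNthSyzygy A n K N ∧ IsFirstSyzygy A W K
/-- `(W, b)` is a tensor product of the right `Λ`-module `X` and the left `Λ`-module `Y`
over `Λ`: `b` is biadditive and `Λ`-balanced, and universal among such maps into abelian
groups. -/
structure IsTensor (Λ : Type u) [Ring Λ]
    (X : Type u) [AddCommGroup X] [Module Λᵐᵒᵖ X]
    (Y : Type u) [AddCommGroup Y] [Module Λ Y]
    (W : Type u) [AddCommGroup W] (b : X → Y → W) : Prop where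
  add_left : ∀ x x' y, b (x + x') y = b x y + b x' y
  add_right : ∀ x y y', b x (y + y') = b x y + b x y'
  balanced : ∀ x (a : Λ) y, b (MulOpposite.op a • x) y = b x (a • y)
  universal : ∀ (T : Type u) [AddCommGroup T] (c : X → Y → T),
      (∀ x x' y, c (x + x') y = c x y + c x' y) →
      (∀ x y y', c x (y + y') = c x y + c x y') →
      (∀ x (a : Λ) y, c (MulOpposite.op a • x) y = c x (a • y)) →
      ∃! f : W →+ T, ∀ x y, f (b x y) = c x y


/-!
Over a field, `Λᵉ = Λ ⊗[k] Λᵐᵒᵖ` is free as a right `Λ`-module, so every bimodule syzygy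
`Ω^n Λ` is projective as a right `Λ`-module and each sequence `0 → Ω^{n+1} Λ → P → Ω^n Λ → 0`
splits as a sequence of right modules. It therefore stays short exact after `- ⊗_Λ V`, and
`P ⊗_Λ V` is finitely generated projective because `Λᵉ ⊗_Λ V ≅ Λ ⊗[k] V` is free of finite rank.
By induction `Ω^n Λ ⊗_Λ V ≅ Ω^n V ⊕ T`; lifting the surjection `P ⊗_Λ V → Ω^n V ⊕ T` through the
projective cover of `Ω^n V ⊕ T` (a cover of `Ω^n V` plus the identity of `T`) and splitting off
the kernel of the lift, as in Schanuel's lemma, gives `Ω^{n+1} Λ ⊗_Λ V ≅ Ω^{n+1} V ⊕ T'`.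

The tensor product over the noncommutative ring `Λ` is built as the quotient of `M ⊗[ℤ] V` by
the balancing relations.
-/

open MulOpposite

section ProjectiveCover

variable {Λ : Type u} [Ring Λ] {R C T : Type u} [AddCommGroup R] [Module Λ R]
  [AddCommGroup C] [Module Λ C] [AddCommGroup T] [Module Λ T]

lemma IsProjectiveCover.prodMap_id {g : R →ₗ[Λ] C} (hg : IsProjectiveCover Λ g)
    [Module.Projective Λ T] : IsProjectiveCover Λ (g.prodMap (LinearMap.id : T →ₗ[Λ] T)) := by
  have := hg.projective
  refine ⟨inferInstance, fun ⟨c, t⟩ => ?_, fun N hN => ?_⟩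
  · obtain ⟨r, rfl⟩ := hg.surjective c
    exact ⟨(r, t), rfl⟩
  have hker (p) (hp : p ∈ LinearMap.ker (g.prodMap (LinearMap.id : T →ₗ[Λ] T))) :
      g p.1 = 0 ∧ p.2 = 0 :=
    Prod.ext_iff.1 hp
  have hN_inl : N.comap (LinearMap.inl Λ R T) = ⊤ := by
    refine hg.superfluous _ (Submodule.eq_top_iff'.2 fun r => ?_)
    obtain ⟨n, hn, p, hp, hnp⟩ := Submodule.mem_sup.1 (hN ▸ Submodule.mem_top : (r, (0 : T)) ∈ _)
    have hn' : n = (r - p.1, 0) := by rw [eq_sub_of_add_eq hnp]; ext <;> simp [(hker p hp).2]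
    refine Submodule.mem_sup.2 ⟨r - p.1, ?_, p.1, (hker p hp).1, sub_add_cancel r p.1⟩
    simpa [hn'] using hn
  refine Submodule.eq_top_iff'.2 fun x => ?_
  obtain ⟨n, hn, p, hp, rfl⟩ := Submodule.mem_sup.1 (hN ▸ Submodule.mem_top : x ∈ _)
  have hp' : p = LinearMap.inl Λ R T p.1 := Prod.ext rfl (hker p hp).2
  exact N.add_mem hn (hp' ▸ Submodule.mem_comap.1 (hN_inl ▸ Submodule.mem_top))

def kerProdMapIdEquiv (g : R →ₗ[Λ] C) :
    LinearMap.ker (g.prodMap (LinearMap.id : T →ₗ[Λ] T)) ≃ₗ[Λ] LinearMap.ker g where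
  toFun x := ⟨x.1.1, congrArg Prod.fst x.2⟩
  invFun y := ⟨(y, 0), by simp [y.2]⟩
  left_inv x := Subtype.ext (Prod.ext rfl (congrArg Prod.snd x.2).symm)
  right_inv _ := rfl
  map_add' _ _ := rfl
  map_smul' _ _ := rfl

lemma IsProjectiveCover.exists_ker_equiv_prod {Q : Type u} [AddCommGroup Q] [Module Λ Q]
    [Module.Projective Λ Q] [Module.Finite Λ Q] {g : R →ₗ[Λ] C} (hg : IsProjectiveCover Λ g)
    {p : Q →ₗ[Λ] C} (hp : Function.Surjective p) :
    ∃ T' : ModuleCat.{u} Λ, Module.Projective Λ T' ∧ Module.Finite Λ T' ∧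
      Nonempty (LinearMap.ker p ≃ₗ[Λ] LinearMap.ker g × T') := by
  have := hg.projective
  obtain ⟨h, hgh⟩ := Module.projective_lifting_property g p hg.surjective
  have hgh' (q : Q) : g (h q) = p q := LinearMap.congr_fun hgh q
  -- `h` is onto because `ker g` is superfluous, so it splits and `T' = ker h`
  have hh : Function.Surjective h := by
    refine LinearMap.range_eq_top.1 (hg.superfluous _ (Submodule.eq_top_iff'.2 fun r => ?_))
    obtain ⟨q, hq⟩ := hp (g r)
    refine Submodule.mem_sup.2 ⟨h q, ⟨q, rfl⟩, r - h q, ?_, add_sub_cancel _ _⟩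
    simp [hgh', hq]
  obtain ⟨σ, hσ⟩ := Module.projective_lifting_property h LinearMap.id hh
  have hσ' (r : R) : h (σ r) = r := LinearMap.congr_fun hσ r
  let ρ : Q →ₗ[Λ] LinearMap.ker h :=
    (LinearMap.id - σ ∘ₗ h).codRestrict _ fun q => by simp [hσ']
  have hρ (q : LinearMap.ker h) : ρ q = q := Subtype.ext (by simp [ρ])
  have : Module.Projective Λ (LinearMap.ker h) :=
    .of_split (LinearMap.ker h).subtype ρ (LinearMap.ext hρ)
  have : Module.Finite Λ (LinearMap.ker h) := .of_surjective ρ fun q => ⟨q, hρ q⟩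
  refine ⟨.of Λ (LinearMap.ker h), ‹_›, ‹_›, ⟨
    { toFun x := (⟨h x, by simp [hgh']⟩, ρ x)
      invFun y := ⟨σ y.1 + y.2, by simp [← hgh', hσ']⟩
      left_inv x := Subtype.ext (by simp [ρ])
      right_inv y := Prod.ext (Subtype.ext (by simp [hσ'])) (Subtype.ext (by simp [ρ, hσ']))
      map_add' x y := by ext <;> simp
      map_smul' a x := by ext <;> simp }⟩⟩

end ProjectiveCover

lemma Function.Exact.exists_retraction_of_section {R K P C : Type*} [Ring R]
    [AddCommGroup K] [Module R K] [AddCommGroup P] [Module R P] [AddCommGroup C] [Module R C]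
    {i : K →ₗ[R] P} {f : P →ₗ[R] C} (hex : Function.Exact i f) (hi : Function.Injective i)
    {s : C →ₗ[R] P} (hs : f ∘ₗ s = LinearMap.id) :
    ∃ r : P →ₗ[R] K, r ∘ₗ i = LinearMap.id ∧ i ∘ₗ r + s ∘ₗ f = LinearMap.id := by
  have hs' (c : C) : f (s c) = c := LinearMap.congr_fun hs c
  let e := LinearEquiv.ofInjective i hi
  let q : P →ₗ[R] LinearMap.range i :=
    (LinearMap.id - s ∘ₗ f).codRestrict _ fun x => (hex _).1 (by simp [hs'])
  have hq (x : P) : (q x : P) = x - s (f x) := rfl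
  have hie (y : LinearMap.range i) : i (e.symm y) = y := by
    rw [← LinearEquiv.ofInjective_apply (h := hi), LinearEquiv.apply_symm_apply]
  refine ⟨e.symm.toLinearMap ∘ₗ q, LinearMap.ext fun x => hi ?_, LinearMap.ext fun x => ?_⟩
  · simp [hie, hq, hex.apply_apply_eq_zero]
  · simp [hie, hq]

section BalancedTensor

variable (Λ : Type*) [Ring Λ] (M : Type*) [AddCommGroup M] [Module Λ M] [Module Λᵐᵒᵖ M]
  (V : Type*) [AddCommGroup V] [Module Λ V]

def balancingRelations : Set (M ⊗[ℤ] V) :=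
  {z | ∃ (a : Λ) (m : M) (v : V), (op a • m) ⊗ₜ v - m ⊗ₜ (a • v) = z}

/-- `M ⊗_Λ V` for a `Λ`-bimodule `M`, with the left `Λ`-action coming from `M`. -/
abbrev BalancedTensor : Type _ :=
  (M ⊗[ℤ] V) ⧸ Submodule.span Λ (balancingRelations Λ M V)

namespace BalancedTensor

/-- The relations are stable under the left action, so additive maps killing them descend. -/
lemma span_balancingRelations_restrictScalars [SMulCommClass Λ Λᵐᵒᵖ M] :
    (Submodule.span Λ (balancingRelations Λ M V)).restrictScalars ℤ =
      Submodule.span ℤ (balancingRelations Λ M V) := by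
  refine le_antisymm ?_ (Submodule.span_le_restrictScalars ℤ Λ _)
  let N : Submodule Λ (M ⊗[ℤ] V) :=
    { Submodule.span ℤ (balancingRelations Λ M V) with
      smul_mem' := fun b z hz => by
        induction hz using Submodule.span_induction with
        | mem z hz =>
          obtain ⟨a, m, v, rfl⟩ := hz
          refine Submodule.subset_span ⟨a, b • m, v, ?_⟩
          simp [smul_sub, smul_tmul', smul_comm b (op a)]
        | zero => simp
        | add x y _ _ hx hy => simpa using add_mem hx hy
        | smul n x _ hx => simpa [smul_comm b n] using Submodule.smul_mem _ n hx }
  exact fun x hx => (Submodule.span_le.2 Submodule.subset_span : Submodule.span Λ _ ≤ N) hx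

variable {Λ M V}

def tmul (m : M) (v : V) : BalancedTensor Λ M V := Submodule.Quotient.mk (m ⊗ₜ v)

@[simp] lemma add_tmul (m m' : M) (v : V) :
    (tmul (m + m') v : BalancedTensor Λ M V) = tmul m v + tmul m' v := by
  simp [tmul, TensorProduct.add_tmul]

@[simp] lemma tmul_add (m : M) (v v' : V) :
    (tmul m (v + v') : BalancedTensor Λ M V) = tmul m v + tmul m v' := by
  simp [tmul, TensorProduct.tmul_add]

@[simp] lemma zero_tmul (v : V) : (tmul 0 v : BalancedTensor Λ M V) = 0 := by
  simp [tmul]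

lemma op_smul_tmul (a : Λ) (m : M) (v : V) :
    (tmul (op a • m) v : BalancedTensor Λ M V) = tmul m (a • v) :=
  (Submodule.Quotient.eq _).2 (Submodule.subset_span ⟨a, m, v, rfl⟩)

lemma smul_tmul (a : Λ) (m : M) (v : V) :
    a • (tmul m v : BalancedTensor Λ M V) = tmul (a • m) v := rfl

@[elab_as_elim]
lemma induction_on {motive : BalancedTensor Λ M V → Prop} (z : BalancedTensor Λ M V)
    (tmul : ∀ m v, motive (tmul m v)) (add : ∀ x y, motive x → motive y → motive (x + y)) :
    motive z := by
  obtain ⟨z, rfl⟩ := Submodule.mkQ_surjective _ z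
  induction z using TensorProduct.induction_on with
  | zero => simpa using tmul 0 0
  | tmul m v => exact tmul m v
  | add x y hx hy => simpa using add _ _ hx hy

@[ext]
lemma addHom_ext {G : Type*} [AddCommGroup G] {f g : BalancedTensor Λ M V →+ G}
    (h : ∀ m v, f (tmul m v) = g (tmul m v)) : f = g :=
  AddMonoidHom.ext fun z => induction_on z h fun x y hx hy => by simp [hx, hy]

variable (Λ M V) in
def mk : M →+ V →+ BalancedTensor Λ M V :=
  AddMonoidHom.mk' (fun m => AddMonoidHom.mk' (tmul m) (tmul_add m))
    fun m m' => AddMonoidHom.ext (add_tmul m m')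

@[simp] lemma mk_apply (m : M) (v : V) : mk Λ M V m v = tmul m v := rfl

variable [SMulCommClass Λ Λᵐᵒᵖ M]

variable (Λ) in
def liftAddHom {G : Type*} [AddCommGroup G] (c : M →+ V →+ G)
    (hc : ∀ (a : Λ) m v, c (op a • m) v = c m (a • v)) : BalancedTensor Λ M V →+ G :=
  let ℓ := TensorProduct.liftAddHom c fun n m v => by simp
  QuotientAddGroup.lift (Submodule.span Λ (balancingRelations Λ M V)).toAddSubgroup ℓ
    fun z hz => by
      have hz : z ∈ (Submodule.span Λ (balancingRelations Λ M V)).restrictScalars ℤ := hz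
      rw [span_balancingRelations_restrictScalars] at hz
      refine (Submodule.span_le (p := ℓ.toIntLinearMap.ker)).2 ?_ hz
      rintro _ ⟨a, m, v, rfl⟩
      simp [ℓ, hc]

@[simp] lemma liftAddHom_tmul {G : Type*} [AddCommGroup G] (c : M →+ V →+ G) (hc) (m : M)
    (v : V) : liftAddHom Λ c hc (tmul m v) = c m v :=
  rfl

variable {N P : Type*} [AddCommGroup N] [Module Λ N] [Module Λᵐᵒᵖ N]
  [AddCommGroup P] [Module Λ P] [Module Λᵐᵒᵖ P]

/-- Right `Λ`-linearity suffices to tensor a map with `V`, at the price of additivity only. -/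
def map (f : M →ₗ[Λᵐᵒᵖ] N) : BalancedTensor Λ M V →+ BalancedTensor Λ N V :=
  liftAddHom Λ ((mk Λ N V).comp f.toAddMonoidHom) fun a m v => by simp [← op_smul_tmul]

@[simp] lemma map_tmul (f : M →ₗ[Λᵐᵒᵖ] N) (m : M) (v : V) :
    map f (tmul m v : BalancedTensor Λ M V) = tmul (f m) v :=
  rfl

def mapₗ (f : M →ₗ[Λᵐᵒᵖ] N) (hf : ∀ (a : Λ) m, f (a • m) = a • f m) :
    BalancedTensor Λ M V →ₗ[Λ] BalancedTensor Λ N V where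
  __ := map f
  map_smul' a z := induction_on z (fun m v => by simp [smul_tmul, hf])
    fun x y hx hy => by simp_all [smul_add]

@[simp] lemma mapₗ_apply (f : M →ₗ[Λᵐᵒᵖ] N) (hf) (z : BalancedTensor Λ M V) :
    mapₗ f hf z = map f z :=
  rfl

lemma map_id : map (V := V) (LinearMap.id : M →ₗ[Λᵐᵒᵖ] M) = AddMonoidHom.id _ := by
  ext; rfl

lemma map_comp [SMulCommClass Λ Λᵐᵒᵖ N] (g : N →ₗ[Λᵐᵒᵖ] P) (f : M →ₗ[Λᵐᵒᵖ] N) :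
    map (V := V) (g ∘ₗ f) = (map g).comp (map f) := by
  ext; rfl

lemma map_map [SMulCommClass Λ Λᵐᵒᵖ N] (g : N →ₗ[Λᵐᵒᵖ] P) (f : M →ₗ[Λᵐᵒᵖ] N)
    (z : BalancedTensor Λ M V) : map g (map f z) = map (g ∘ₗ f) z := by
  rw [map_comp]; rfl

lemma map_add_left (f g : M →ₗ[Λᵐᵒᵖ] N) : map (V := V) (f + g) = map f + map g := by
  ext; simp

lemma map_zero_left : map (V := V) (0 : M →ₗ[Λᵐᵒᵖ] N) = 0 := by
  ext; simp

def congr [SMulCommClass Λ Λᵐᵒᵖ N] (e : M ≃ₗ[Λᵐᵒᵖ] N) (he : ∀ (a : Λ) m, e (a • m) = a • e m) :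
    BalancedTensor Λ M V ≃ₗ[Λ] BalancedTensor Λ N V where
  __ := mapₗ e.toLinearMap he
  invFun := map e.symm.toLinearMap
  left_inv z := induction_on z (fun m v => by simp) fun x y hx hy => by simp_all
  right_inv z := induction_on z (fun m v => by simp) fun x y hx hy => by simp_all

lemma map_shortExact_of_section [SMulCommClass Λ Λᵐᵒᵖ N] [SMulCommClass Λ Λᵐᵒᵖ P]
    {i : M →ₗ[Λᵐᵒᵖ] N} {f : N →ₗ[Λᵐᵒᵖ] P} (hex : Function.Exact i f) (hi : Function.Injective i)
    {s : P →ₗ[Λᵐᵒᵖ] N} (hs : f ∘ₗ s = LinearMap.id) :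
    Function.Injective (map (V := V) i) ∧ Function.Exact (map (V := V) i) (map f) ∧
      Function.Surjective (map (V := V) f) := by
  obtain ⟨r, hri, hsplit⟩ := hex.exists_retraction_of_section hi hs
  refine ⟨Function.LeftInverse.injective (g := map r) fun z => by rw [map_map, hri, map_id]; rfl,
    fun y => ⟨fun hy => ⟨map r y, ?_⟩, ?_⟩,
    Function.LeftInverse.surjective (g := map s) fun z => by rw [map_map, hs, map_id]; rfl⟩
  · have := congrArg (fun φ => map (V := V) φ y) hsplit
    simpa [map_add_left, ← map_map, hy, map_id] using this
  · rintro ⟨x, rfl⟩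
    rw [map_map, hex.linearMap_comp_eq_zero, map_zero_left]; rfl

section Pi

variable {ι : Type*} [Fintype ι] [DecidableEq ι] (M : ι → Type*) [∀ i, AddCommGroup (M i)]
  [∀ i, Module Λ (M i)] [∀ i, Module Λᵐᵒᵖ (M i)] [∀ i, SMulCommClass Λ Λᵐᵒᵖ (M i)]

variable (Λ V) in
def piEquiv : BalancedTensor Λ (Π i, M i) V ≃ₗ[Λ] Π i, BalancedTensor Λ (M i) V where
  __ := LinearMap.pi fun i => mapₗ (LinearMap.proj i) fun _ _ => rfl
  invFun z := ∑ i, map (LinearMap.single Λᵐᵒᵖ M i) (z i)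
  left_inv z := by
    induction z using induction_on with
    | tmul m v =>
      calc ∑ i, tmul (Pi.single i (m i)) v
          = tmul (∑ i, Pi.single i (m i)) v := (map_sum ((mk Λ (Π i, M i) V).flip v) _ _).symm
        _ = tmul m v := by rw [Finset.univ_sum_single]
    | add x y hx hy => simp_all [Finset.sum_add_distrib]
  right_inv z := funext fun j => by
    have (i : ι) (x : BalancedTensor Λ (M i) V) :
        map (LinearMap.proj j) (map (LinearMap.single Λᵐᵒᵖ M i) x) =
          Pi.single (M := fun i => BalancedTensor Λ (M i) V) i x j := by
      induction x using induction_on with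
      | tmul m v => obtain rfl | h := eq_or_ne j i <;> simp [*]
      | add x y hx hy => simp_all [Pi.single_add]
    change map (LinearMap.proj j) (∑ i, map (LinearMap.single Λᵐᵒᵖ M i) (z i)) = z j
    simp_rw [map_sum, this, ← Finset.sum_apply, Finset.univ_sum_single]

end Pi

lemma _root_.IsTensor.nonempty_linearEquiv_balancedTensor {Λ M V W : Type u} [Ring Λ]
    [AddCommGroup M] [Module Λ M] [Module Λᵐᵒᵖ M] [SMulCommClass Λ Λᵐᵒᵖ M] [AddCommGroup V]
    [Module Λ V] [AddCommGroup W] [Module Λ W] {b : M → V → W} (hb : IsTensor Λ M V W b)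
    (hbl : ∀ (a : Λ) m v, b (a • m) v = a • b m v) :
    Nonempty (W ≃ₗ[Λ] BalancedTensor Λ M V) := by
  obtain ⟨b', hb'⟩ : ∃ b' : M →+ V →+ W, ∀ m v, b' m v = b m v :=
    ⟨AddMonoidHom.mk' (fun m => AddMonoidHom.mk' (b m) (hb.add_right m))
      fun m m' => AddMonoidHom.ext (hb.add_left m m'), fun _ _ => rfl⟩
  let lift : BalancedTensor Λ M V →ₗ[Λ] W :=
    { toFun := liftAddHom Λ b' fun a m v => by simp [hb', hb.balanced]
      map_add' := map_add _
      map_smul' a z := induction_on z (fun m v => by simp [smul_tmul, hb', hbl])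
        fun x y hx hy => by simp_all [smul_add] }
  obtain ⟨f, hf, -⟩ := hb.universal _ tmul add_tmul tmul_add fun m a v => op_smul_tmul a m v
  have hbu := hb.universal W b hb.add_left hb.add_right hb.balanced
  refine ⟨LinearEquiv.symm { lift with
    invFun := f
    left_inv z := induction_on z (fun m v => by simp [lift, hb', hf]) fun x y hx hy => by
      simp_all
    right_inv w := DFunLike.congr_fun (hbu.unique (y₁ := lift.toAddMonoidHom.comp f)
      (y₂ := .id W) (fun m v => by simp [lift, hb', hf]) fun m v => rfl) w }⟩

end BalancedTensor

end BalancedTensor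

def AddEquiv.toOpLinearEquiv {Λ M : Type*} [Ring Λ] [AddCommGroup M] [Module Λᵐᵒᵖ M] (e : M ≃+ Λ)
    (he : ∀ (a : Λ) (x : M), e (MulOpposite.op a • x) = e x * a) : M ≃ₗ[Λᵐᵒᵖ] Λᵐᵒᵖ where
  toFun x := MulOpposite.op (e x)
  invFun y := e.symm y.unop
  left_inv x := by simp
  right_inv y := by simp
  map_add' x y := by simp
  map_smul' b x := by
    rw [← op_unop b, he]
    simp

lemma isTensor_smul_of_addEquiv {Λ M V : Type u} [Ring Λ] [AddCommGroup M] [Module Λᵐᵒᵖ M]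
    [AddCommGroup V] [Module Λ V] (e : M ≃+ Λ) (he : ∀ (a : Λ) (x : M), e (op a • x) = e x * a) :
    IsTensor Λ M V V (fun m v => e m • v) := by
  have he' (x : M) : op (e x) • e.symm 1 = x :=
    e.injective (by rw [he, e.apply_symm_apply, one_mul])
  refine ⟨fun x x' v => by simp [add_smul], fun x v v' => smul_add _ _ _, fun x a v => ?_,
    fun T _ c hc₁ hc₂ hc => ⟨AddMonoidHom.mk' (c (e.symm 1)) (hc₂ _), fun x v => ?_,
      fun f hf => AddMonoidHom.ext fun v => ?_⟩⟩
  · rw [he, mul_smul]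
  · simp [← hc, he']
  · simpa using hf (e.symm 1) v

/-- A module over the enveloping algebra `Λ ⊗[k] Λᵐᵒᵖ`, regarded as a `Λ`-bimodule. -/
@[nolint unusedArguments]
def AsBimodule (k Λ : Type*) [CommRing k] [Ring Λ] [Algebra k Λ] (M : Type*) [AddCommGroup M]
    [Module (Λ ⊗[k] Λᵐᵒᵖ) M] : Type _ :=
  M

namespace AsBimodule

variable {k Λ : Type*} [CommRing k] [Ring Λ] [Algebra k Λ] {M N P : Type*}
  [AddCommGroup M] [Module (Λ ⊗[k] Λᵐᵒᵖ) M] [AddCommGroup N] [Module (Λ ⊗[k] Λᵐᵒᵖ) N]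
  [AddCommGroup P] [Module (Λ ⊗[k] Λᵐᵒᵖ) P]

instance : AddCommGroup (AsBimodule k Λ M) := ‹AddCommGroup M›

instance : Module (Λ ⊗[k] Λᵐᵒᵖ) (AsBimodule k Λ M) := ‹Module _ M›

noncomputable instance : Module Λ (AsBimodule k Λ M) :=
  Module.compHom M (Algebra.TensorProduct.includeLeftRingHom : Λ →+* Λ ⊗[k] Λᵐᵒᵖ)

noncomputable instance : Module Λᵐᵒᵖ (AsBimodule k Λ M) :=
  Module.compHom M (Algebra.TensorProduct.includeRight : Λᵐᵒᵖ →ₐ[k] Λ ⊗[k] Λᵐᵒᵖ).toRingHom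

lemma smul_def (a : Λ) (m : AsBimodule k Λ M) : a • m = (a ⊗ₜ[k] (1 : Λᵐᵒᵖ)) • m := rfl

lemma op_smul_def (a : Λᵐᵒᵖ) (m : AsBimodule k Λ M) : a • m = ((1 : Λ) ⊗ₜ[k] a) • m := rfl

instance : SMulCommClass Λ Λᵐᵒᵖ (AsBimodule k Λ M) where
  smul_comm a b m := by
    simp only [smul_def, op_smul_def, smul_smul, Algebra.TensorProduct.tmul_mul_tmul, one_mul,
      mul_one]

def rmap (f : M →ₗ[Λ ⊗[k] Λᵐᵒᵖ] N) : AsBimodule k Λ M →ₗ[Λᵐᵒᵖ] AsBimodule k Λ N where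
  toFun := f
  map_add' := f.map_add
  map_smul' _ m := f.map_smul _ m

lemma rmap_id : rmap (LinearMap.id : M →ₗ[Λ ⊗[k] Λᵐᵒᵖ] M) = LinearMap.id := rfl

lemma rmap_comp (g : N →ₗ[Λ ⊗[k] Λᵐᵒᵖ] P) (f : M →ₗ[Λ ⊗[k] Λᵐᵒᵖ] N) :
    rmap (g ∘ₗ f) = rmap g ∘ₗ rmap f :=
  rfl

lemma rmap_smul (f : M →ₗ[Λ ⊗[k] Λᵐᵒᵖ] N) (a : Λ) (m : AsBimodule k Λ M) :
    rmap f (a • m) = a • rmap f m :=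
  f.map_smul _ m

def requiv (e : M ≃ₗ[Λ ⊗[k] Λᵐᵒᵖ] N) : AsBimodule k Λ M ≃ₗ[Λᵐᵒᵖ] AsBimodule k Λ N where
  __ := rmap e.toLinearMap
  invFun := e.symm
  left_inv := e.left_inv
  right_inv := e.right_inv

lemma exact_rmap_subtype (f : M →ₗ[Λ ⊗[k] Λᵐᵒᵖ] N) :
    Function.Exact (rmap (M := LinearMap.ker f) (LinearMap.ker f).subtype) (rmap f) :=
  LinearMap.exact_subtype_ker_map f

noncomputable def commEquiv : AsBimodule k Λ (Λ ⊗[k] Λᵐᵒᵖ) ≃ₗ[Λᵐᵒᵖ] Λᵐᵒᵖ ⊗[k] Λ where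
  __ := Algebra.TensorProduct.comm k Λ Λᵐᵒᵖ
  map_smul' b := fun (z : Λ ⊗[k] Λᵐᵒᵖ) => by
    change Algebra.TensorProduct.comm k Λ Λᵐᵒᵖ (((1 : Λ) ⊗ₜ b) * z) =
      b • Algebra.TensorProduct.comm k Λ Λᵐᵒᵖ z
    rw [map_mul, Algebra.TensorProduct.comm_tmul]
    generalize Algebra.TensorProduct.comm k Λ Λᵐᵒᵖ z = w
    induction w using TensorProduct.induction_on with
    | zero => simp
    | tmul x y => simp [smul_tmul']
    | add x y hx hy => simp [mul_add, hx, hy]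

instance [Module.Free k Λ] : Module.Free Λᵐᵒᵖ (AsBimodule k Λ (Λ ⊗[k] Λᵐᵒᵖ)) :=
  .of_equiv commEquiv.symm

variable (k Λ) in
def piEquiv (ι : Type*) : AsBimodule k Λ (ι → M) ≃ₗ[Λᵐᵒᵖ] (ι → AsBimodule k Λ M) where
  __ := Equiv.refl _
  map_add' _ _ := rfl
  map_smul' _ _ := rfl

lemma projective_of_projective [Module.Free k Λ] [Module.Finite (Λ ⊗[k] Λᵐᵒᵖ) M]
    [Module.Projective (Λ ⊗[k] Λᵐᵒᵖ) M] : Module.Projective Λᵐᵒᵖ (AsBimodule k Λ M) := by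
  obtain ⟨n, π, σ, -, -, hπσ⟩ := Module.Finite.exists_comp_eq_id_of_projective (Λ ⊗[k] Λᵐᵒᵖ) M
  have : Module.Projective Λᵐᵒᵖ (AsBimodule k Λ (Fin n → Λ ⊗[k] Λᵐᵒᵖ)) :=
    .of_equiv (piEquiv k Λ (M := Λ ⊗[k] Λᵐᵒᵖ) (Fin n)).symm
  exact .of_split (rmap σ) (rmap π) (LinearMap.ext fun x => LinearMap.congr_fun hπσ x)

end AsBimodule

open AsBimodule

lemma IsNthSyzygy.projective_asBimodule {k Λ : Type u} [CommRing k] [Ring Λ] [Algebra k Λ]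
    [Module.Free k Λ] {L : Type u} [AddCommGroup L] [Module (Λ ⊗[k] Λᵐᵒᵖ) L] (e : L ≃+ Λ)
    (heR : ∀ (a : Λ) (x : L), e (((1 : Λ) ⊗ₜ[k] op a) • x) = e x * a) {n : ℕ}
    {M : ModuleCat.{u} (Λ ⊗[k] Λᵐᵒᵖ)} (hM : IsNthSyzygy _ n M (.of _ L)) :
    Module.Projective Λᵐᵒᵖ (AsBimodule k Λ M) := by
  induction n generalizing M with
  | zero =>
    obtain ⟨eM⟩ := hM
    exact .of_equiv ((requiv eM).trans
      (AddEquiv.toOpLinearEquiv (M := AsBimodule k Λ L) (e : AsBimodule k Λ L ≃+ Λ) heR)).symm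
  | succ n ih =>
    obtain ⟨K, hK, P, f, _, hf, ⟨eM⟩⟩ := hM
    have := ih hK
    have := hf.projective
    have := projective_of_projective (k := k) (Λ := Λ) (M := P)
    obtain ⟨s, hs⟩ := Module.projective_lifting_property (rmap f) LinearMap.id hf.surjective
    obtain ⟨r, hr, -⟩ :=
      (exact_rmap_subtype f).exists_retraction_of_section Subtype.val_injective hs
    have : Module.Projective Λᵐᵒᵖ (AsBimodule k Λ (LinearMap.ker f)) := .of_split _ r hr
    exact .of_equiv (requiv eM).symm

section EnvelopingTensor

variable {k Λ : Type u} [CommRing k] [Ring Λ] [Algebra k Λ]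
  {V : Type u} [AddCommGroup V] [Module Λ V] [Module k V] [IsScalarTower k Λ V]

/-- Exhibits `Λ ⊗[k] V` as `Λᵉ ⊗_Λ V`, see `isTensor_envelopingTensorMap`. -/
noncomputable def envelopingTensorMap (z : Λ ⊗[k] Λᵐᵒᵖ) (v : V) : Λ ⊗[k] V :=
  ((LinearMap.toSpanSingleton Λ V v).restrictScalars k ∘ₗ
    (MulOpposite.opLinearEquiv k).symm.toLinearMap).lTensor Λ z

@[simp] lemma envelopingTensorMap_tmul (x : Λ) (y : Λᵐᵒᵖ) (v : V) :
    envelopingTensorMap (x ⊗ₜ[k] y) v = x ⊗ₜ (y.unop • v) :=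
  rfl

@[simp] lemma envelopingTensorMap_zero (v : V) :
    envelopingTensorMap (0 : Λ ⊗[k] Λᵐᵒᵖ) v = 0 :=
  map_zero _

lemma envelopingTensorMap_add_left (z z' : Λ ⊗[k] Λᵐᵒᵖ) (v : V) :
    envelopingTensorMap (z + z') v = envelopingTensorMap z v + envelopingTensorMap z' v :=
  map_add _ z z'

lemma envelopingTensorMap_add_right (z : Λ ⊗[k] Λᵐᵒᵖ) (v v' : V) :
    envelopingTensorMap z (v + v') = envelopingTensorMap z v + envelopingTensorMap z v' := by
  induction z using TensorProduct.induction_on with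
  | zero => simp
  | tmul x y => simp [tmul_add]
  | add z z' hz hz' => simp only [envelopingTensorMap_add_left, hz, hz']; abel

lemma envelopingTensorMap_op_mul (a : Λ) (z : Λ ⊗[k] Λᵐᵒᵖ) (v : V) :
    envelopingTensorMap (((1 : Λ) ⊗ₜ op a) * z) v = envelopingTensorMap z (a • v) := by
  induction z using TensorProduct.induction_on with
  | zero => simp
  | tmul x y => simp [mul_smul]
  | add z z' hz hz' => simp only [mul_add, envelopingTensorMap_add_left, hz, hz']

lemma envelopingTensorMap_mul (a : Λ) (z : Λ ⊗[k] Λᵐᵒᵖ) (v : V) :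
    envelopingTensorMap ((a ⊗ₜ (1 : Λᵐᵒᵖ)) * z) v = a • envelopingTensorMap z v := by
  induction z using TensorProduct.induction_on with
  | zero => simp
  | tmul x y => simp [smul_tmul']
  | add z z' hz hz' => simp only [mul_add, envelopingTensorMap_add_left, hz, hz', smul_add]

lemma isTensor_envelopingTensorMap :
    IsTensor Λ (AsBimodule k Λ (Λ ⊗[k] Λᵐᵒᵖ)) V (Λ ⊗[k] V) envelopingTensorMap := by
  refine ⟨envelopingTensorMap_add_left, envelopingTensorMap_add_right,
    fun z a v => envelopingTensorMap_op_mul a z v,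
    fun T _ (c : Λ ⊗[k] Λᵐᵒᵖ → V → T) hc₁ hc₂ hc => ?_⟩
  -- restate the hypotheses on `c` in terms of the ring `Λ ⊗[k] Λᵐᵒᵖ`
  have hc_add (z z' : Λ ⊗[k] Λᵐᵒᵖ) (v : V) : c (z + z') v = c z v + c z' v := hc₁ z z' v
  have hc_bal (a : Λ) (z : Λ ⊗[k] Λᵐᵒᵖ) (v : V) :
      c (((1 : Λ) ⊗ₜ op a) * z) v = c z (a • v) :=
    hc z a v
  have hc_zero (v : V) : c 0 v = 0 := by simpa using hc_add 0 0 v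
  have hc_one (x : Λ) (y : Λᵐᵒᵖ) (v : V) : c (x ⊗ₜ 1) (y.unop • v) = c (x ⊗ₜ y) v := by
    rw [← hc_bal, Algebra.TensorProduct.tmul_mul_tmul, one_mul, mul_one, op_unop]
  obtain ⟨c₀, hc₀⟩ : ∃ c₀ : Λ →+ V →+ T, ∀ x v, c₀ x v = c (x ⊗ₜ 1) v :=
    ⟨AddMonoidHom.mk' (fun x => AddMonoidHom.mk' (c (x ⊗ₜ 1)) (hc₂ _))
      fun x x' => AddMonoidHom.ext fun v => by simp [add_tmul, hc_add], fun _ _ => rfl⟩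
  let F := TensorProduct.liftAddHom c₀ fun t x v => by
    have : (t • x) ⊗ₜ[k] (1 : Λᵐᵒᵖ) = ((1 : Λ) ⊗ₜ op (algebraMap k Λ t)) * (x ⊗ₜ 1) := by
      rw [Algebra.TensorProduct.tmul_mul_tmul, one_mul, mul_one,
        Algebra.algebraMap_eq_smul_one, op_smul, op_one, smul_tmul]
    rw [hc₀, hc₀, this, hc_bal, algebraMap_smul]
  refine ⟨F, fun z v => ?_, fun F' hF' => AddMonoidHom.ext fun w => ?_⟩
  · induction z using TensorProduct.induction_on with
    | zero => simp [hc_zero]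
    | tmul x y => simp [F, hc₀, hc_one]
    | add z z' hz hz' => rw [envelopingTensorMap_add_left, map_add, hz, hz', hc_add]
  · induction w using TensorProduct.induction_on with
    | zero => simp
    | tmul x v => simpa [F, hc₀] using hF' (x ⊗ₜ 1) v
    | add w w' hw hw' => simp [hw, hw']

end EnvelopingTensor

lemma BalancedTensor.projective_finite_asBimodule {k Λ : Type u} [Field k] [Ring Λ] [Algebra k Λ]
    [Module.Finite k Λ] {V : Type u} [AddCommGroup V] [Module Λ V] [Module.Finite Λ V]
    (P : Type u) [AddCommGroup P] [Module (Λ ⊗[k] Λᵐᵒᵖ) P] [Module.Finite (Λ ⊗[k] Λᵐᵒᵖ) P]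
    [Module.Projective (Λ ⊗[k] Λᵐᵒᵖ) P] :
    Module.Projective Λ (BalancedTensor Λ (AsBimodule k Λ P) V) ∧
      Module.Finite Λ (BalancedTensor Λ (AsBimodule k Λ P) V) := by
  let : Module k V := Module.compHom V (algebraMap k Λ)
  have : IsScalarTower k Λ V := ⟨fun t a v => by
    change (t • a) • v = algebraMap k Λ t • a • v
    rw [Algebra.smul_def, mul_smul]⟩
  have : Module.Finite k V := .trans Λ V
  obtain ⟨eΛ⟩ := (isTensor_envelopingTensorMap (k := k) (Λ := Λ) (V := V)
    ).nonempty_linearEquiv_balancedTensor fun a z v => envelopingTensorMap_mul a z v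
  let basis := Algebra.TensorProduct.basis Λ (Module.Free.chooseBasis k V)
  have : Module.Free Λ (Λ ⊗[k] V) := .of_basis basis
  have : Module.Finite Λ (Λ ⊗[k] V) := .of_basis basis
  obtain ⟨n, π, σ, -, -, hπσ⟩ := Module.Finite.exists_comp_eq_id_of_projective (Λ ⊗[k] Λᵐᵒᵖ) P
  let eF : BalancedTensor Λ (AsBimodule k Λ (Fin n → Λ ⊗[k] Λᵐᵒᵖ)) V ≃ₗ[Λ] (Fin n → Λ ⊗[k] V) :=
    congr (AsBimodule.piEquiv k Λ (M := Λ ⊗[k] Λᵐᵒᵖ) (Fin n)) (fun _ _ => rfl) ≪≫ₗ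
      piEquiv Λ V _ ≪≫ₗ LinearEquiv.piCongrRight fun _ => eΛ.symm
  have : Module.Projective Λ (BalancedTensor Λ (AsBimodule k Λ (Fin n → Λ ⊗[k] Λᵐᵒᵖ)) V) :=
    .of_equiv eF.symm
  have : Module.Finite Λ (BalancedTensor Λ (AsBimodule k Λ (Fin n → Λ ⊗[k] Λᵐᵒᵖ)) V) :=
    .equiv eF.symm
  have hsplit : mapₗ (V := V) (rmap π) (rmap_smul π) ∘ₗ mapₗ (rmap σ) (rmap_smul σ) =
      LinearMap.id := LinearMap.ext fun z => by
    simp [map_map, ← rmap_comp, hπσ, rmap_id, map_id]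
  exact ⟨.of_split _ _ hsplit, .of_surjective (mapₗ (rmap π) (rmap_smul π))
    (Function.LeftInverse.surjective (LinearMap.congr_fun hsplit))⟩

section Syzygy

variable {k Λ : Type u} [Field k] [Ring Λ] [Algebra k Λ] [Module.Finite k Λ]
  {V : Type u} [AddCommGroup V] [Module Λ V] [Module.Finite Λ V]

open BalancedTensor

lemma exists_balancedTensor_ker_equiv {P K : Type u} [AddCommGroup P] [Module (Λ ⊗[k] Λᵐᵒᵖ) P]
    [Module.Finite (Λ ⊗[k] Λᵐᵒᵖ) P] [Module.Projective (Λ ⊗[k] Λᵐᵒᵖ) P] [AddCommGroup K]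
    [Module (Λ ⊗[k] Λᵐᵒᵖ) K] [Module.Projective Λᵐᵒᵖ (AsBimodule k Λ K)]
    {f : P →ₗ[Λ ⊗[k] Λᵐᵒᵖ] K} (hf : Function.Surjective f) {R C T : Type u} [AddCommGroup R]
    [Module Λ R] [AddCommGroup C] [Module Λ C] [AddCommGroup T] [Module Λ T]
    [Module.Projective Λ T] {g : R →ₗ[Λ] C} (hg : IsProjectiveCover Λ g)
    (eK : BalancedTensor Λ (AsBimodule k Λ K) V ≃ₗ[Λ] C × T) :
    ∃ T' : ModuleCat.{u} Λ, Module.Projective Λ T' ∧ Module.Finite Λ T' ∧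
      Nonempty (BalancedTensor Λ (AsBimodule k Λ (LinearMap.ker f)) V ≃ₗ[Λ]
        LinearMap.ker g × T') := by
  obtain ⟨s, hs⟩ := Module.projective_lifting_property (rmap f) LinearMap.id hf
  obtain ⟨hι, hexact, hsurj⟩ :=
    map_shortExact_of_section (V := V) (exact_rmap_subtype f) Subtype.val_injective hs
  let ι := mapₗ (V := V) (rmap (M := LinearMap.ker f) (LinearMap.ker f).subtype) (rmap_smul _)
  let φ := eK.toLinearMap ∘ₗ mapₗ (V := V) (rmap f) (rmap_smul f)
  have hφ : LinearMap.ker φ = LinearMap.range ι := by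
    rw [LinearEquiv.ker_comp]
    exact hexact.linearMap_ker_eq
  obtain ⟨_, _⟩ := projective_finite_asBimodule (k := k) (Λ := Λ) (V := V) P
  obtain ⟨T', _, _, ⟨e'⟩⟩ :=
    (hg.prodMap_id (T := T)).exists_ker_equiv_prod (p := φ) (eK.surjective.comp hsurj)
  exact ⟨T', ‹_›, ‹_›, ⟨LinearEquiv.ofInjective ι hι ≪≫ₗ LinearEquiv.ofEq _ _ hφ.symm ≪≫ₗ e' ≪≫ₗ
    (kerProdMapIdEquiv g).prodCongr (LinearEquiv.refl _ _)⟩⟩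

lemma exists_balancedTensor_syzygy_equiv {L : Type u} [AddCommGroup L]
    [Module (Λ ⊗[k] Λᵐᵒᵖ) L] (e : L ≃+ Λ)
    (heL : ∀ (a : Λ) (x : L), e ((a ⊗ₜ[k] (1 : Λᵐᵒᵖ)) • x) = a * e x)
    (heR : ∀ (a : Λ) (x : L), e (((1 : Λ) ⊗ₜ[k] op a) • x) = e x * a) {n : ℕ}
    {M : ModuleCat.{u} (Λ ⊗[k] Λᵐᵒᵖ)} {S : ModuleCat.{u} Λ}
    (hM : IsNthSyzygy _ n M (.of _ L)) (hS : IsNthSyzygy Λ n S (.of Λ V)) :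
    ∃ T' : ModuleCat.{u} Λ, Module.Projective Λ T' ∧ Module.Finite Λ T' ∧
      Nonempty (BalancedTensor Λ (AsBimodule k Λ M) V ≃ₗ[Λ] S × T') := by
  induction n generalizing M S with
  | zero =>
    obtain ⟨eM⟩ := hM
    obtain ⟨eS⟩ := hS
    obtain ⟨eL⟩ := (isTensor_smul_of_addEquiv (M := AsBimodule k Λ L) (V := V)
      (e : AsBimodule k Λ L ≃+ Λ) heR).nonempty_linearEquiv_balancedTensor
      fun a x v => (congrArg (· • v) (heL a x)).trans (mul_smul a (e x) v)
    exact ⟨.of Λ PUnit, inferInstance, inferInstance, ⟨congr (requiv eM) (rmap_smul eM.toLinearMap)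
      ≪≫ₗ eL.symm ≪≫ₗ eS.symm ≪≫ₗ LinearEquiv.prodUnique.symm⟩⟩
  | succ n ih =>
    obtain ⟨K, hK, P, f, _, hf, ⟨eM⟩⟩ := hM
    obtain ⟨C, hC, R, g, -, hg, ⟨eS⟩⟩ := hS
    obtain ⟨T, _, -, ⟨eK⟩⟩ := ih hK hC
    have := hK.projective_asBimodule e heR
    have := hf.projective
    obtain ⟨T', _, _, ⟨e'⟩⟩ := exists_balancedTensor_ker_equiv hf.surjective hg eK
    exact ⟨T', ‹_›, ‹_›, ⟨congr (requiv eM) (rmap_smul eM.toLinearMap) ≪≫ₗ e' ≪≫ₗ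
      eS.symm.prodCongr (LinearEquiv.refl _ _)⟩⟩

end Syzygy

lemma IsTensor.asBimodule {k Λ : Type u} [CommRing k] [Ring Λ] [Algebra k Λ] {X V W : Type u}
    [AddCommGroup X] [Module (Λ ⊗[k] Λᵐᵒᵖ) X] [Module Λᵐᵒᵖ X]
    (hXr : ∀ (a : Λ) (x : X), op a • x = ((1 : Λ) ⊗ₜ[k] op a) • x) [AddCommGroup V]
    [Module Λ V] [AddCommGroup W] {b : X → V → W} (hb : IsTensor Λ X V W b) :
    IsTensor Λ (AsBimodule k Λ X) V W b where
  add_left := hb.add_left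
  add_right := hb.add_right
  balanced x a v := (congrArg (b · v) (hXr a x)).symm.trans (hb.balanced x a v)
  universal T _ c h₁ h₂ h₃ :=
    hb.universal T c h₁ h₂ fun x a v => (congrArg (c · v) (hXr a x)).trans (h₃ x a v)

theorem bimodule_syzygy_tensor_iso_syzygy_sum_projective_general
    (k : Type u) [Field k] (Λ : Type u) [Ring Λ] [Algebra k Λ] [FiniteDimensional k Λ]
    -- L is Λ regarded as a Λ–Λ-bimodule (a module over Λᵉ = Λ ⊗_k Λᵐᵒᵖ)
    (L : Type u) [AddCommGroup L] [Module (Λ ⊗[k] Λᵐᵒᵖ) L] (e : L ≃+ Λ)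
    (heL : ∀ (a : Λ) (x : L), e ((a ⊗ₜ[k] (1 : Λᵐᵒᵖ)) • x) = a * e x)
    (heR : ∀ (a : Λ) (x : L), e (((1 : Λ) ⊗ₜ[k] MulOpposite.op a) • x) = e x * a)
    (i : ℕ)
    -- X is the i-th bimodule syzygy Ω^i_{Λᵉ}Λ, with its restricted one-sided structures
    (X : Type u) [AddCommGroup X] [Module (Λ ⊗[k] Λᵐᵒᵖ) X] [Module Λ X] [Module Λᵐᵒᵖ X]
    (hXl : ∀ (a : Λ) (x : X), a • x = (a ⊗ₜ[k] (1 : Λᵐᵒᵖ)) • x)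
    (hXr : ∀ (a : Λ) (x : X), MulOpposite.op a • x = ((1 : Λ) ⊗ₜ[k] MulOpposite.op a) • x)
    (hX : IsNthSyzygy (Λ ⊗[k] Λᵐᵒᵖ) i (ModuleCat.of (Λ ⊗[k] Λᵐᵒᵖ) X)
      (ModuleCat.of (Λ ⊗[k] Λᵐᵒᵖ) L))
    -- V is a finitely generated left Λ-module, SV its i-th syzygy Ω^i_Λ V
    (V : Type u) [AddCommGroup V] [Module Λ V] [Module.Finite Λ V]
    (SV : Type u) [AddCommGroup SV] [Module Λ SV]
    (hSV : IsNthSyzygy Λ i (ModuleCat.of Λ SV) (ModuleCat.of Λ V))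
    -- (W, b) is a realization of the tensor product Ω^i_{Λᵉ}Λ ⊗_Λ V as a left Λ-module
    (W : Type u) [AddCommGroup W] [Module Λ W] (b : X → V → W)
    (hb : IsTensor Λ X V W b)
    (hbl : ∀ (a : Λ) (x : X) (v : V), b (a • x) v = a • b x v) :
    ∃ T' : ModuleCat.{u} Λ, Module.Projective Λ T' ∧ Module.Finite Λ T' ∧
      Nonempty (W ≃ₗ[Λ] (SV × T')) := by
  obtain ⟨eW⟩ := (hb.asBimodule hXr).nonempty_linearEquiv_balancedTensor fun a x v =>
    (congrArg (b · v) (hXl a x)).symm.trans (hbl a x v)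
  obtain ⟨T', hT'p, hT'f, ⟨eX⟩⟩ := exists_balancedTensor_syzygy_equiv (V := V) e heL heR hX hSV
  exact ⟨T', hT'p, hT'f, ⟨eW ≪≫ₗ eX⟩⟩

theorem bimodule_syzygy_tensor_iso_syzygy_sum_projective
    (k : Type u) [Field k] (Λ : Type u) [Ring Λ] [Algebra k Λ] [FiniteDimensional k Λ]
    -- L is Λ regarded as a Λ–Λ-bimodule (a module over Λᵉ = Λ ⊗_k Λᵐᵒᵖ)
    (L : Type u) [AddCommGroup L] [Module (Λ ⊗[k] Λᵐᵒᵖ) L] (e : L ≃+ Λ)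
    (heL : ∀ (a : Λ) (x : L), e ((a ⊗ₜ[k] (1 : Λᵐᵒᵖ)) • x) = a * e x)
    (heR : ∀ (a : Λ) (x : L), e (((1 : Λ) ⊗ₜ[k] MulOpposite.op a) • x) = e x * a)
    (i : ℕ) (hi : 1 ≤ i)
    -- X is the i-th bimodule syzygy Ω^i_{Λᵉ}Λ, with its restricted one-sided structures
    (X : Type u) [AddCommGroup X] [Module (Λ ⊗[k] Λᵐᵒᵖ) X] [Module Λ X] [Module Λᵐᵒᵖ X]
    (hXl : ∀ (a : Λ) (x : X), a • x = (a ⊗ₜ[k] (1 : Λᵐᵒᵖ)) • x)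
    (hXr : ∀ (a : Λ) (x : X), MulOpposite.op a • x = ((1 : Λ) ⊗ₜ[k] MulOpposite.op a) • x)
    (hX : IsNthSyzygy (Λ ⊗[k] Λᵐᵒᵖ) i (ModuleCat.of (Λ ⊗[k] Λᵐᵒᵖ) X)
      (ModuleCat.of (Λ ⊗[k] Λᵐᵒᵖ) L))
    -- V is a finitely generated left Λ-module, SV its i-th syzygy Ω^i_Λ V
    (V : Type u) [AddCommGroup V] [Module Λ V] [Module.Finite Λ V]
    (SV : Type u) [AddCommGroup SV] [Module Λ SV]
    (hSV : IsNthSyzygy Λ i (ModuleCat.of Λ SV) (ModuleCat.of Λ V))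
    -- (W, b) is a realization of the tensor product Ω^i_{Λᵉ}Λ ⊗_Λ V as a left Λ-module
    (W : Type u) [AddCommGroup W] [Module Λ W] (b : X → V → W)
    (hb : IsTensor Λ X V W b)
    (hbl : ∀ (a : Λ) (x : X) (v : V), b (a • x) v = a • b x v) :
    ∃ T' : ModuleCat.{u} Λ, Module.Projective Λ T' ∧ Module.Finite Λ T' ∧
      Nonempty (W ≃ₗ[Λ] (SV × T')) :=
  bimodule_syzygy_tensor_iso_syzygy_sum_projective_general k Λ L e heL heR i X hXl hXr hX V SV hSV W
    b hb hbl
end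

section
/- Let Λ be a finite dimensional k-algebra, R an Artinian commutative local k-algebra with residue field k, V a finitely generated left Λ-module with projective cover α: P(V) → V, and (M, φ) a lift of V over R. Then the induced epimorphism α_R : R ⊗_k P(V) → M (lifting α through φ) is a projective RΛ-module cover of M, and its kernel Ω_{RΛ}M is free as an R-module with k ⊗_R Ω_{RΛ}M ≅ Ω_Λ V. -/
open TensorProduct

/-- `R` is an Artinian object of the category `Ĉ` of complete local commutative Noetherian
`k`-algebras with residue field `k`: it is an Artinian local commutative `k`-algebra whose
residue field is `k` (via the structure map). -/
def IsArtinianObjC (k R : Type u) [Field k] [CommRing R] [Algebra k R] [IsLocalRing R] : Prop :=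
  IsArtinianRing R ∧ Function.Bijective (algebraMap k (IsLocalRing.ResidueField R))

/-- A lift of the `Λ`-module `V` over `R`: a finitely generated `RΛ = R ⊗_k Λ`-module `M`,
free over `R`, together with a surjective `Λ`-linear map `π : M → V` realizing an
isomorphism `k ⊗_R M ≅ V` (i.e. with kernel `𝔪_R · M`). -/
structure Lift (k Λ R V : Type u) [Field k] [Ring Λ] [Algebra k Λ]
    [CommRing R] [Algebra k R] [IsLocalRing R]
    [AddCommGroup V] [Module Λ V] where
  M : Type u
  [addCommGroup : AddCommGroup M]
  [modRΛ : Module (R ⊗[k] Λ) M]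
  [modR : Module R M]
  [modΛ : Module Λ M]
  [towerR : IsScalarTower R (R ⊗[k] Λ) M]
  compatΛ : ∀ (a : Λ) (m : M),
    a • m = (Algebra.TensorProduct.includeRight (R := k) (A := R) (B := Λ) a) • m
  finite : Module.Finite (R ⊗[k] Λ) M
  free : Module.Free R M
  π : M →ₗ[Λ] V
  surj : Function.Surjective π
  ker_eq : ∀ m : M, π m = 0 ↔ m ∈ (IsLocalRing.maximalIdeal R) • (⊤ : Submodule R M)

attribute [instance] Lift.addCommGroup Lift.modRΛ Lift.modR Lift.modΛ Lift.towerR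

/-
Since `R` is Artinian local, `𝔪 = 𝔪_R` is nilpotent, so Nakayama's lemma holds for arbitrary
`R`-modules: an `R`-submodule of a lift that maps onto the reduction is everything. Applied to the
image of `α_R` this gives surjectivity, and applied to a submodule `N` with `N + ker α_R = P_R`
(whose reduction is then all of `P` by superfluity of `ker α`) it shows `ker α_R` is superfluous.
As `M` is `R`-free, `α_R` splits `R`-linearly, so `Ω = ker α_R` is an `R`-direct summand of the
finite free `R`-module `P_R`: it is free over the local ring `R`, and `Ω ∩ 𝔪 P_R = 𝔪 Ω`. Hence
reduction `P_R → P` restricts to a map `Ω → Ω_Λ V` with kernel `𝔪 Ω`; it is onto because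
`α_R (𝔪 P_R) = 𝔪 M`.
-/

theorem Submodule.eq_top_of_sup_smul_top_eq_top_of_isNilpotent {R M : Type*} [CommRing R]
    [AddCommGroup M] [Module R M] {I : Ideal R} (hI : IsNilpotent I) {N : Submodule R M}
    (h : N ⊔ I • ⊤ = ⊤) : N = ⊤ := by
  obtain ⟨n, hn⟩ := hI
  have key : ∀ i : ℕ, N ⊔ I ^ i • (⊤ : Submodule R M) = ⊤ := by
    intro i
    induction i with
    | zero => simp
    | succ i ih =>
      have : I ^ i • (⊤ : Submodule R M) ≤ N ⊔ I ^ (i + 1) • ⊤ := calc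
        I ^ i • ⊤ = I ^ i • (N ⊔ I • ⊤) := by rw [h]
        _ = I ^ i • N ⊔ I ^ (i + 1) • ⊤ := by
          rw [Submodule.smul_sup, pow_succ, Submodule.mul_smul]
        _ ≤ N ⊔ I ^ (i + 1) • ⊤ := sup_le_sup_right Submodule.smul_le_right _
      exact top_unique (ih.ge.trans (sup_le le_sup_left this))
  simpa [hn] using key n

theorem LinearMap.exists_retraction_ker {R M N : Type*} [CommRing R] [AddCommGroup M]
    [Module R M] [AddCommGroup N] [Module R N] [Module.Projective R N] {g : M →ₗ[R] N}
    (hg : Function.Surjective g) : ∃ r : M →ₗ[R] ker g, r ∘ₗ (ker g).subtype = id := by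
  obtain ⟨s, hs⟩ := g.exists_rightInverse_of_surjective (range_eq_top.mpr hg)
  refine ⟨codRestrict (ker g) (id - s ∘ₗ g) fun x => ?_, ?_⟩
  · simp [← comp_apply g s, hs]
  · ext u
    simp [mem_ker.mp u.2]

theorem Submodule.comap_subtype_smul_top_of_retraction {R M : Type*} [CommRing R]
    [AddCommGroup M] [Module R M] {K : Submodule R M} {r : M →ₗ[R] K}
    (hr : r ∘ₗ K.subtype = LinearMap.id) (I : Ideal R) :
    (I • ⊤ : Submodule R M).comap K.subtype = I • ⊤ := by
  refine le_antisymm (fun u hu => ?_) ?_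
  · have hru : r u = u := LinearMap.congr_fun hr u
    have : r u ∈ (I • ⊤ : Submodule R M).map r := mem_map_of_mem hu
    rw [map_smul'', map_top, hru] at this
    exact (smul_mono_right I (le_top : LinearMap.range r ≤ ⊤)) this
  · rw [← map_le_iff_le_comap, map_smul'', map_top]
    exact smul_mono_right I le_top

theorem Module.free_ker_of_isLocalRing {R M N : Type*} [CommRing R] [IsLocalRing R]
    [AddCommGroup M] [Module R M] [Module.Finite R M] [Module.Projective R M]
    [AddCommGroup N] [Module R N] [Module.Projective R N] {g : M →ₗ[R] N}
    (hg : Function.Surjective g) : Module.Free R (LinearMap.ker g) := by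
  obtain ⟨r, hr⟩ := LinearMap.exists_retraction_ker hg
  have : Module.Projective R (LinearMap.ker g) := .of_split _ r hr
  have : Module.Finite R (LinearMap.ker g) :=
    .of_surjective r fun u => ⟨u, by simpa using LinearMap.congr_fun hr u⟩
  exact Module.free_of_flat_of_isLocalRing

open IsLocalRing

namespace Lift

variable {k Λ R V : Type u} [Field k] [Ring Λ] [Algebra k Λ] [CommRing R] [Algebra k R]
  [IsLocalRing R] [AddCommGroup V] [Module Λ V]

theorem eq_top_of_forall_exists_π_eq (L : Lift k Λ R V) (hnil : IsNilpotent (maximalIdeal R))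
    {N : Submodule R L.M} (hN : ∀ v, ∃ m ∈ N, L.π m = v) : N = ⊤ := by
  refine Submodule.eq_top_of_sup_smul_top_eq_top_of_isNilpotent hnil
    (Submodule.eq_top_iff'.mpr fun m => ?_)
  obtain ⟨n, hn, hnm⟩ := hN (L.π m)
  have : m - n ∈ maximalIdeal R • (⊤ : Submodule R L.M) := (L.ker_eq _).mp (by simp [hnm])
  simpa using Submodule.add_mem_sup hn this

theorem surjective_of_surjective_π_comp (L : Lift k Λ R V) (hnil : IsNilpotent (maximalIdeal R))
    {X : Type*} [AddCommGroup X] [Module R X] {g : X →ₗ[R] L.M}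
    (hg : Function.Surjective (L.π ∘ g)) : Function.Surjective g := by
  rw [← LinearMap.range_eq_top]
  refine L.eq_top_of_forall_exists_π_eq hnil fun v => ?_
  obtain ⟨x, hx⟩ := hg v
  exact ⟨g x, ⟨x, rfl⟩, hx⟩

def restrictScalars (L : Lift k Λ R V) (N : Submodule (R ⊗[k] Λ) L.M) : Submodule Λ L.M where
  carrier := N
  add_mem' := N.add_mem
  zero_mem' := N.zero_mem
  smul_mem' a x hx := by
    rw [L.compatΛ]
    exact N.smul_mem _ hx

variable {P : Type u} [AddCommGroup P] [Module Λ P] {α : P →ₗ[Λ] V}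

theorem superfluous_ker {L : Lift k Λ R V} {PR : Lift k Λ R P}
    (hnil : IsNilpotent (maximalIdeal R))
    (hα : ∀ N : Submodule Λ P, N ⊔ LinearMap.ker α = ⊤ → N = ⊤)
    {αR : PR.M →ₗ[R ⊗[k] Λ] L.M} (hαR : ∀ x, L.π (αR x) = α (PR.π x))
    (N : Submodule (R ⊗[k] Λ) PR.M) (hN : N ⊔ LinearMap.ker αR = ⊤) : N = ⊤ := by
  have hmap : (PR.restrictScalars N).map PR.π = ⊤ := by
    refine hα _ (Submodule.eq_top_iff'.mpr fun p => ?_)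
    obtain ⟨x, rfl⟩ := PR.surj p
    obtain ⟨n, hn, w, hw, rfl⟩ := Submodule.mem_sup.mp (hN.ge (Submodule.mem_top : x ∈ ⊤))
    have hαw : α (PR.π w) = 0 := by rw [← hαR, LinearMap.mem_ker.mp hw, map_zero]
    rw [map_add]
    exact Submodule.add_mem_sup ⟨n, hn, rfl⟩ hαw
  rw [← Submodule.restrictScalars_eq_top_iff R]
  refine PR.eq_top_of_forall_exists_π_eq hnil fun p => ?_
  obtain ⟨n, hn, hnp⟩ := hmap.ge (Submodule.mem_top : p ∈ ⊤)
  exact ⟨n, hn, hnp⟩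

theorem exists_mem_ker_π_eq {L : Lift k Λ R V} {PR : Lift k Λ R P} {g : PR.M →ₗ[R] L.M}
    (hg : Function.Surjective g) (hαg : ∀ x, L.π (g x) = α (PR.π x)) {p : P} (hp : α p = 0) :
    ∃ x ∈ LinearMap.ker g, PR.π x = p := by
  obtain ⟨x, rfl⟩ := PR.surj p
  have hgx : g x ∈ (maximalIdeal R • ⊤ : Submodule R PR.M).map g := by
    rw [Submodule.map_smul'', Submodule.map_top, LinearMap.range_eq_top.mpr hg]
    exact (L.ker_eq _).mp (by rw [hαg, hp])
  obtain ⟨y, hy, hyx⟩ := hgx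
  refine ⟨x - y, by simp [hyx], ?_⟩
  rw [map_sub, (PR.ker_eq y).mpr hy, sub_zero]

theorem π_eq_zero_iff_mem_smul_top_ker {PR : Lift k Λ R P} {N : Type*} [AddCommGroup N]
    [Module R N] [Module.Projective R N] {g : PR.M →ₗ[R] N} (hg : Function.Surjective g)
    (u : LinearMap.ker g) :
    PR.π u = 0 ↔ u ∈ maximalIdeal R • (⊤ : Submodule R (LinearMap.ker g)) := by
  obtain ⟨r, hr⟩ := LinearMap.exists_retraction_ker hg
  rw [← Submodule.comap_subtype_smul_top_of_retraction hr, Submodule.mem_comap, PR.ker_eq]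
  rfl

end Lift

theorem induced_map_is_projective_cover_and_kernel_lifts_syzygy_general
    (k : Type u) [Field k] (Λ : Type u) [Ring Λ] [Algebra k Λ] [FiniteDimensional k Λ]
    (R : Type u) [CommRing R] [Algebra k R] [IsLocalRing R] (hR : IsArtinianObjC k R)
    (V : Type u) [AddCommGroup V] [Module Λ V]
    -- α : P → V is a projective cover of V over Λ
    (P : Type u) [AddCommGroup P] [Module Λ P]
    (α : P →ₗ[Λ] V) (hα : IsProjectiveCover Λ α)
    -- (M, φ) is a lift of V over R
    (L : Lift k Λ R V)
    -- P_R = R ⊗_k P is the corresponding projective lift of P over R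
    (PR : Lift k Λ R P) (hPR : Module.Projective (R ⊗[k] Λ) PR.M)
    -- α_R : P_R → M lifts α through the augmentations
    (αR : PR.M →ₗ[R ⊗[k] Λ] L.M)
    (hαR : ∀ x : PR.M, L.π (αR x) = α (PR.π x)) :
    -- α_R is a projective cover of M over RΛ ...
    IsProjectiveCover (R ⊗[k] Λ) αR ∧
    -- ... whose kernel Ω_{RΛ}M is free over R ...
    Module.Free R ↥(LinearMap.ker αR) ∧
    -- ... and is a lift of Ω_Λ V = ker α: it admits a Λ-equivariant surjection onto
    -- ker α with kernel 𝔪_R · ker α_R, i.e. k ⊗_R Ω_{RΛ}M ≅ Ω_Λ V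
    ∃ ψ : ↥(LinearMap.ker αR) →+ ↥(LinearMap.ker α),
      (∀ (a : Λ) (u : ↥(LinearMap.ker αR)),
        ψ ⟨(Algebra.TensorProduct.includeRight (R := k) (A := R) (B := Λ) a :
              R ⊗[k] Λ) • (u : PR.M),
            Submodule.smul_mem _ _ u.2⟩ = a • ψ u) ∧
      Function.Surjective ψ ∧
      (∀ u, ψ u = 0 ↔
        u ∈ (IsLocalRing.maximalIdeal R) • (⊤ : Submodule R ↥(LinearMap.ker αR))) := by
  have : IsArtinianRing R := hR.1
  have hnil := (isArtinianRing_iff_isNilpotent_maximalIdeal R).mp this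
  have := L.free
  have := PR.free
  have := PR.finite
  have : Module.Finite R PR.M := .trans (R ⊗[k] Λ) PR.M
  have hsurj : Function.Surjective (αR.restrictScalars R) :=
    L.surjective_of_surjective_π_comp hnil fun v => by
      obtain ⟨x, rfl⟩ := (hα.surjective.comp PR.surj) v
      exact ⟨x, hαR x⟩
  let ψ : LinearMap.ker αR →+ LinearMap.ker α :=
    (PR.π.toAddMonoidHom.comp (LinearMap.ker αR).subtype.toAddMonoidHom).codRestrict
      (LinearMap.ker α).toAddSubgroup fun u => by simp [← hαR]
  refine ⟨⟨hPR, hsurj, Lift.superfluous_ker hnil hα.superfluous hαR⟩,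
    Module.free_ker_of_isLocalRing hsurj, ψ, fun a u => ?_, fun ⟨p, hp⟩ => ?_, fun u => ?_⟩
  · exact Subtype.ext ((congrArg PR.π (PR.compatΛ a u).symm).trans (PR.π.map_smul a u))
  · obtain ⟨x, hx, hxp⟩ := Lift.exists_mem_ker_π_eq hsurj hαR hp
    exact ⟨⟨x, hx⟩, Subtype.ext hxp⟩
  · exact Subtype.ext_iff.trans (Lift.π_eq_zero_iff_mem_smul_top_ker hsurj u)

theorem induced_map_is_projective_cover_and_kernel_lifts_syzygy
    (k : Type u) [Field k] (Λ : Type u) [Ring Λ] [Algebra k Λ] [FiniteDimensional k Λ]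
    (R : Type u) [CommRing R] [Algebra k R] [IsLocalRing R] (hR : IsArtinianObjC k R)
    (V : Type u) [AddCommGroup V] [Module Λ V] [Module.Finite Λ V]
    -- α : P → V is a projective cover of V over Λ
    (P : Type u) [AddCommGroup P] [Module Λ P] [Module.Finite Λ P]
    (α : P →ₗ[Λ] V) (hα : IsProjectiveCover Λ α)
    -- (M, φ) is a lift of V over R
    (L : Lift k Λ R V)
    -- P_R = R ⊗_k P is the corresponding projective lift of P over R
    (PR : Lift k Λ R P) (hPR : Module.Projective (R ⊗[k] Λ) PR.M)
    -- α_R : P_R → M lifts α through the augmentations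
    (αR : PR.M →ₗ[R ⊗[k] Λ] L.M)
    (hαR : ∀ x : PR.M, L.π (αR x) = α (PR.π x)) :
    -- α_R is a projective cover of M over RΛ ...
    IsProjectiveCover (R ⊗[k] Λ) αR ∧
    -- ... whose kernel Ω_{RΛ}M is free over R ...
    Module.Free R ↥(LinearMap.ker αR) ∧
    -- ... and is a lift of Ω_Λ V = ker α: it admits a Λ-equivariant surjection onto
    -- ker α with kernel 𝔪_R · ker α_R, i.e. k ⊗_R Ω_{RΛ}M ≅ Ω_Λ V
    ∃ ψ : ↥(LinearMap.ker αR) →+ ↥(LinearMap.ker α),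
      (∀ (a : Λ) (u : ↥(LinearMap.ker αR)),
        ψ ⟨(Algebra.TensorProduct.includeRight (R := k) (A := R) (B := Λ) a :
              R ⊗[k] Λ) • (u : PR.M),
            Submodule.smul_mem _ _ u.2⟩ = a • ψ u) ∧
      Function.Surjective ψ ∧
      (∀ u, ψ u = 0 ↔
        u ∈ (IsLocalRing.maximalIdeal R) • (⊤ : Submodule R ↥(LinearMap.ker αR))) :=
  induced_map_is_projective_cover_and_kernel_lifts_syzygy_general k Λ R hR V P α hα L PR hPR αR hαR
end
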